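/- There exists a set A ⊆ ℕ with positive upper Banach density such that there is no infinite set B ⊆ ℕ and bounded sequence (t_k) of natural numbers for which, for every k, the set of sums ∑_{n∈F} n with F ⊆ B + s_k (for some sequence s_k), 1 ≤ |F| ≤ k, is contained in A − t_k. In particular the shift sequence (t_k) in the density finite sums theorem with auxiliary shifts cannot in general be taken bounded. -/

import Mathlib

open Filter
open scoped Classical BigOperators

/-- Upper Banach density `d*(A) = limsup_{L→∞} sup_M |A ∩ [M, M+L)| / L`. -/
noncomputable def upperBanachDensity (A : Set ℕ) : ℝ :=
  Filter.limsup (fun L : ℕ =>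
    ⨆ M : ℕ, (((Finset.Ico M (M + L)).filter (fun n => n ∈ A)).card : ℝ) / L)
    Filter.atTop

/-!
The set `A` keeps `m` only if `m mod 4ⁿ ≥ n` for every `n` with `4ⁿ ≤ m`. The excluded residues
have total relative density at most `∑ n / 4ⁿ = 4/9`, so `A` fills at least `5/9` of every window
`[4ᴷ, 2·4ᴷ)`. Conversely, suppose all sums of `1 ≤ |F| ≤ k` elements of `B + s_k` lie in `A - t_k`
with `t_k ≤ C`, and put `p = 4^(C+1)`. By Erdős–Ginzburg–Ziv, any `2p - 1` positive elements of
`B + s_p` contain `p` whose sum `Q` is a positive multiple of `p`; then `Q + t_p ≥ p` has residue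
`t_p < C + 1` modulo `4^(C+1)`, so it is not in `A`.
-/

open Finset

lemma card_filter_Ico_div_le_one (A : Set ℕ) (M L : ℕ) :
    (#{n ∈ Ico M (M + L) | n ∈ A} : ℝ) / L ≤ 1 := by
  rcases Nat.eq_zero_or_pos L with rfl | hL
  · simp
  rw [div_le_one (by exact_mod_cast hL)]
  exact_mod_cast (card_filter_le _ _).trans (by simp)

lemma le_upperBanachDensity_of_frequently {A : Set ℕ} {c : ℝ}
    (h : ∃ᶠ L in atTop, ∃ M, c * L ≤ #{n ∈ Ico M (M + L) | n ∈ A}) :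
    c ≤ upperBanachDensity A := by
  refine le_limsup_of_frequently_le ?_
    (isBoundedUnder_of ⟨1, fun L => ciSup_le fun M => card_filter_Ico_div_le_one A M L⟩)
  refine (h.and_eventually (eventually_gt_atTop 0)).mono fun L ⟨⟨M, hM⟩, hL⟩ => ?_
  refine le_ciSup_of_le ⟨1, ?_⟩ M ?_
  · rintro _ ⟨M', rfl⟩
    exact card_filter_Ico_div_le_one A M' L
  · rwa [le_div_iff₀ (by exact_mod_cast hL)]

lemma card_filter_mod_lt_le (q n j k : ℕ) :
    #{m ∈ Ico (j * q) ((j + k) * q) | m % q < n} ≤ n * k := by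
  rcases Nat.eq_zero_or_pos q with rfl | hq
  · simp
  calc #{m ∈ Ico (j * q) ((j + k) * q) | m % q < n}
      ≤ #(range n ×ˢ Ico j (j + k)) := by
        refine card_le_card_of_injOn (fun m => (m % q, m / q)) (fun m hm => ?_) fun m _ m' _ h => ?_
        · simp only [coe_filter, mem_Ico, Set.mem_ofPred_eq] at hm
          simp only [coe_product, coe_range, coe_Ico, Set.mem_prod, Set.mem_Iio, Set.mem_Ico]
          exact ⟨hm.2, (Nat.le_div_iff_mul_le hq).2 hm.1.1, (Nat.div_lt_iff_lt_mul hq).2 hm.1.2⟩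
        · simp only [Prod.mk.injEq] at h
          rw [← Nat.div_add_mod m q, ← Nat.div_add_mod m' q, h.1, h.2]
    _ = n * k := by simp

lemma nine_mul_sum_Icc_mul_four_pow (K : ℕ) :
    9 * ∑ n ∈ Icc 1 K, n * 4 ^ (K - n) + 3 * K + 4 = 4 ^ (K + 1) := by
  induction K with
  | zero => simp
  | succ K ih =>
    have hstep : ∑ n ∈ Icc 1 (K + 1), n * 4 ^ (K + 1 - n)
        = 4 * ∑ n ∈ Icc 1 K, n * 4 ^ (K - n) + (K + 1) := by
      rw [sum_Icc_succ_top (by omega), mul_sum, Nat.sub_self, pow_zero, mul_one]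
      congr 1
      refine sum_congr rfl fun n hn => ?_
      rw [Nat.sub_add_comm (mem_Icc.1 hn).2, pow_succ]
      ring
    rw [hstep, pow_succ _ (K + 1)]
    omega

def residueAvoidingSet : Set ℕ := {m | ∀ n, 1 ≤ n → 4 ^ n ≤ m → n ≤ m % 4 ^ n}

lemma exists_mod_lt_of_notMem_residueAvoidingSet {K m : ℕ} (hm : m < 2 * 4 ^ K)
    (hA : m ∉ residueAvoidingSet) : ∃ n ∈ Icc 1 K, m % 4 ^ n < n := by
  simp only [residueAvoidingSet, Set.mem_ofPred_eq, not_forall, not_le] at hA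
  obtain ⟨n, hn, hnm, hlt⟩ := hA
  have hnK : 4 ^ n < 4 ^ (K + 1) := by rw [pow_succ]; omega
  exact ⟨n, mem_Icc.2 ⟨hn, Nat.lt_succ_iff.1 ((Nat.pow_lt_pow_iff_right (by norm_num)).1 hnK)⟩, hlt⟩

lemma card_filter_notMem_residueAvoidingSet_le (K : ℕ) :
    #{m ∈ Ico (4 ^ K) (4 ^ K + 4 ^ K) | m ∉ residueAvoidingSet}
      ≤ ∑ n ∈ Icc 1 K, n * 4 ^ (K - n) := by
  set W := Ico (4 ^ K) (4 ^ K + 4 ^ K)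
  calc #{m ∈ W | m ∉ residueAvoidingSet}
      ≤ #((Icc 1 K).biUnion fun n => {m ∈ W | m % 4 ^ n < n}) := by
        refine card_le_card fun m hm => ?_
        rw [mem_filter, mem_Ico] at hm
        obtain ⟨n, hn, hlt⟩ := exists_mod_lt_of_notMem_residueAvoidingSet (K := K) (by omega) hm.2
        exact mem_biUnion.2 ⟨n, hn, mem_filter.2 ⟨mem_Ico.2 hm.1, hlt⟩⟩
    _ ≤ ∑ n ∈ Icc 1 K, #{m ∈ W | m % 4 ^ n < n} := card_biUnion_le
    _ ≤ ∑ n ∈ Icc 1 K, n * 4 ^ (K - n) := sum_le_sum fun n hn => by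
        have hK : 4 ^ (K - n) * 4 ^ n = 4 ^ K := by
          rw [← pow_add, Nat.sub_add_cancel (mem_Icc.1 hn).2]
        simpa only [add_mul, hK] using card_filter_mod_lt_le (4 ^ n) n (4 ^ (K - n)) (4 ^ (K - n))

lemma five_mul_le_nine_mul_card_filter_mem_residueAvoidingSet (K : ℕ) :
    5 * 4 ^ K ≤ 9 * #{m ∈ Ico (4 ^ K) (4 ^ K + 4 ^ K) | m ∈ residueAvoidingSet} := by
  have hsplit := card_filter_add_card_filter_not (s := Ico (4 ^ K) (4 ^ K + 4 ^ K))
    (· ∈ residueAvoidingSet)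
  have hbad := card_filter_notMem_residueAvoidingSet_le K
  have hsum := nine_mul_sum_Icc_mul_four_pow K
  rw [Nat.card_Ico, Nat.add_sub_cancel] at hsplit
  rw [pow_succ] at hsum
  omega

lemma upperBanachDensity_residueAvoidingSet_pos : 0 < upperBanachDensity residueAvoidingSet := by
  refine (by norm_num : (0 : ℝ) < 5 / 9).trans_le (le_upperBanachDensity_of_frequently ?_)
  refine frequently_atTop.2 fun L₀ => ⟨4 ^ L₀, (Nat.lt_pow_self (by norm_num)).le, 4 ^ L₀, ?_⟩
  have hK := five_mul_le_nine_mul_card_filter_mem_residueAvoidingSet L₀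
  rw [div_mul_eq_mul_div, div_le_iff₀ (by norm_num)]
  norm_cast
  omega

lemma mul_add_notMem_residueAvoidingSet {C c t : ℕ} (hc : 0 < c) (ht : t ≤ C) :
    4 ^ (C + 1) * c + t ∉ residueAvoidingSet := fun hA => by
  have hC : C < 4 ^ (C + 1) := (Nat.lt_succ_self C).trans (Nat.lt_pow_self (by norm_num))
  have hmod := hA (C + 1) C.succ_pos (le_add_right (Nat.le_mul_of_pos_right _ hc))
  rw [Nat.mul_add_mod, Nat.mod_eq_of_lt (ht.trans_lt hC)] at hmod
  omega

lemma Set.Infinite.exists_finset_card_eq_sum_eq_mul {S : Set ℕ} (hS : S.Infinite) {n : ℕ}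
    (hn : 0 < n) : ∃ F : Finset ℕ, ↑F ⊆ S ∧ #F = n ∧ ∃ c, 0 < c ∧ ∑ x ∈ F, x = n * c := by
  obtain ⟨X, hXS, hX⟩ := (hS.sdiff (Set.finite_singleton 0)).exists_subset_card_eq (2 * n - 1)
  obtain ⟨F, hFX, hF, hdvd⟩ := Int.erdos_ginzburg_ziv (fun x : ℕ => (x : ℤ)) hX.ge
  rw [← Nat.cast_sum, Int.natCast_dvd_natCast] at hdvd
  obtain ⟨c, hc⟩ := hdvd
  obtain ⟨x, hx⟩ := card_pos.1 (hF.trans_gt hn)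
  have hpos : 0 < ∑ x ∈ F, x :=
    sum_pos' (fun _ _ => Nat.zero_le _) ⟨x, hx, Nat.pos_of_ne_zero (hXS (hFX hx)).2⟩
  exact ⟨F, fun y hy => (hXS (hFX hy)).1, hF, c, Nat.pos_of_mul_pos_left (hc ▸ hpos), hc⟩

lemma not_exists_bounded_shift_finite_sums_mem_residueAvoidingSet :
    ¬ ∃ (B : Set ℕ) (s t : ℕ → ℕ) (C : ℕ), B.Infinite ∧ (∀ k, t k ≤ C) ∧
        ∀ k, 1 ≤ k → ∀ F : Finset ℕ, ↑F ⊆ (fun b => b + s k) '' B →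
          1 ≤ F.card → F.card ≤ k → (∑ n ∈ F, n) + t k ∈ residueAvoidingSet := by
  rintro ⟨B, s, t, C, hB, ht, hsums⟩
  set p := 4 ^ (C + 1)
  have hp : 0 < p := by positivity
  obtain ⟨F, hFB, hF, c, hc, hsum⟩ :=
    (hB.image (add_left_injective (s p)).injOn).exists_finset_card_eq_sum_eq_mul hp
  have hmem := hsums p hp F hFB (hF ▸ hp) hF.le
  rw [hsum] at hmem
  exact mul_add_notMem_residueAvoidingSet hc (ht p) hmem

theorem stmt5 :
    ∃ A : Set ℕ, 0 < upperBanachDensity A ∧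
      ¬ ∃ (B : Set ℕ) (s t : ℕ → ℕ) (C : ℕ),
        B.Infinite ∧ (∀ k, t k ≤ C) ∧
        ∀ k, 1 ≤ k → ∀ F : Finset ℕ, ↑F ⊆ (fun b => b + s k) '' B →
          1 ≤ F.card → F.card ≤ k → (∑ n ∈ F, n) + t k ∈ A :=
  ⟨residueAvoidingSet, upperBanachDensity_residueAvoidingSet_pos,
    not_exists_bounded_shift_finite_sums_mem_residueAvoidingSet⟩
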